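/- Let H = L + W be the Hamiltonian with L the combinatorial Laplacian of the complete graph on V ≥ 2 vertices and W a diagonal matrix with a unique smallest diagonal entry W_{u₀}. Then the first excited eigenvalue satisfies λ₁ < V + W_{u₁}, where W_{u₁} is the second smallest diagonal entry of W. -/

import Mathlib

open Matrix

/-- The `i`-th smallest eigenvalue (with multiplicity) of a Hermitian matrix. -/
noncomputable def sortedEig {n : ℕ} {A : Matrix (Fin n) (Fin n) ℝ}
    (hA : A.IsHermitian) (i : Fin n) : ℝ :=
  hA.eigenvalues (Tuple.sort hA.eigenvalues i)

/-- The combinatorial Laplacian of the complete graph on `V` vertices: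
`L = V·I − J`, where `J` is the all-ones matrix. -/
def cgL (V : ℕ) : Matrix (Fin V) (Fin V) ℝ :=
  (V : ℝ) • (1 : Matrix (Fin V) (Fin V) ℝ) - Matrix.of (fun _ _ => (1 : ℝ))

/-- The second smallest value of `W`, i.e. the smallest value away from `m`. -/
noncomputable def secondMin {V : ℕ} (hV : 2 ≤ V) (W : Fin V → ℝ) (m : Fin V) : ℝ :=
  (Finset.univ.erase m).inf'
    (by
      rw [Finset.erase_nonempty (Finset.mem_univ m)]
      refine Finset.one_lt_card_iff_nontrivial.mp ?_
      rw [Finset.card_univ, Fintype.card_fin]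
      omega) W

/-! Let `φ₀` be the ground state. Every eigenvalue other than `λ₀` is at least `λ₁`, so
`λ₁ ‖ψ‖² ≤ ⟪ψ, Hψ⟫` whenever `ψ ⟂ φ₀`. Among vectors supported on `{u₀, u₁}` there is a
nonzero `ψ ⟂ φ₀`, and for it
`⟪ψ, Hψ⟫ = (V + W_{u₁}) ‖ψ‖² − (ψ_{u₀} + ψ_{u₁})² − (W_{u₁} − W_{u₀}) ψ_{u₀}²`,
which is strictly below `(V + W_{u₁}) ‖ψ‖²`: as `W_{u₀} < W_{u₁}`, both subtracted terms
vanish only for `ψ = 0`. -/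

open RealInnerProductSpace

namespace Matrix.IsHermitian

variable {n : Type*} [Fintype n] [DecidableEq n] {A : Matrix n n ℝ} (hA : A.IsHermitian)
include hA

lemma toEuclideanLin_eigenvectorBasis (j : n) :
    toEuclideanLin A (hA.eigenvectorBasis j) = hA.eigenvalues j • hA.eigenvectorBasis j := by
  ext i
  simpa using congrFun (hA.mulVec_eigenvectorBasis j) i

lemma inner_eigenvectorBasis_toEuclideanLin (x : EuclideanSpace ℝ n) (j : n) :
    ⟪hA.eigenvectorBasis j, toEuclideanLin A x⟫ =
      hA.eigenvalues j * ⟪hA.eigenvectorBasis j, x⟫ := by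
  rw [← isSymmetric_toEuclideanLin_iff.mpr hA, toEuclideanLin_eigenvectorBasis,
    real_inner_smul_left]

lemma inner_toEuclideanLin_self (x : EuclideanSpace ℝ n) :
    ⟪x, toEuclideanLin A x⟫ = ∑ j, hA.eigenvalues j * ⟪hA.eigenvectorBasis j, x⟫ ^ 2 := by
  rw [← hA.eigenvectorBasis.sum_inner_mul_inner]
  refine Finset.sum_congr rfl fun j _ => ?_
  rw [inner_eigenvectorBasis_toEuclideanLin, real_inner_comm]
  ring

lemma mul_norm_sq_le_inner_toEuclideanLin_self {c : ℝ} {j₀ : n}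
    (hc : ∀ j ≠ j₀, c ≤ hA.eigenvalues j) {x : EuclideanSpace ℝ n}
    (hx : ⟪hA.eigenvectorBasis j₀, x⟫ = 0) :
    c * ‖x‖ ^ 2 ≤ ⟪x, toEuclideanLin A x⟫ := by
  rw [← hA.eigenvectorBasis.sum_sq_inner_right, Finset.mul_sum, inner_toEuclideanLin_self hA]
  refine Finset.sum_le_sum fun j _ => ?_
  rcases eq_or_ne j j₀ with rfl | hj
  · simp [hx]
  · exact mul_le_mul_of_nonneg_right (hc j hj) (sq_nonneg _)

end Matrix.IsHermitian

section SortedEigenvalues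

variable {n : ℕ} {A : Matrix (Fin n) (Fin n) ℝ} (hA : A.IsHermitian)

lemma sortedEig_le_eigenvalues {i j : Fin n} (hij : i ≤ (Tuple.sort hA.eigenvalues).symm j) :
    sortedEig hA i ≤ hA.eigenvalues j := by
  simpa [sortedEig] using Tuple.monotone_sort hA.eigenvalues hij

lemma sortedEig_one_le_eigenvalues (hn : 1 < n) {j : Fin n}
    (hj : j ≠ Tuple.sort hA.eigenvalues ⟨0, by omega⟩) :
    sortedEig hA ⟨1, hn⟩ ≤ hA.eigenvalues j := by
  have h0 : ((Tuple.sort hA.eigenvalues).symm j : ℕ) ≠ 0 := fun h =>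
    hj ((Equiv.symm_apply_eq _).mp (Fin.ext h))
  exact sortedEig_le_eigenvalues hA (Fin.mk_le_of_le_val (by omega))

lemma sortedEig_one_mul_norm_sq_le (hn : 1 < n) {x : EuclideanSpace ℝ (Fin n)}
    (hx : ⟪hA.eigenvectorBasis (Tuple.sort hA.eigenvalues ⟨0, by omega⟩), x⟫ = 0) :
    sortedEig hA ⟨1, hn⟩ * ‖x‖ ^ 2 ≤ ⟪x, toEuclideanLin A x⟫ :=
  hA.mul_norm_sq_le_inner_toEuclideanLin_self (fun _ hj => sortedEig_one_le_eigenvalues hA hn hj) hx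

end SortedEigenvalues

section TwoPointVectors

variable {ι : Type*} [Fintype ι] [DecidableEq ι]

lemma exists_inner_single_add_single_eq_zero (φ : EuclideanSpace ℝ ι) (m u : ι) :
    ∃ a b : ℝ, (a ≠ 0 ∨ b ≠ 0) ∧
      ⟪φ, EuclideanSpace.single m a + EuclideanSpace.single u b⟫ = 0 := by
  simp only [inner_add_right, EuclideanSpace.inner_single_right, conj_trivial]
  by_cases hφ : φ m = 0
  · exact ⟨1, 0, Or.inl one_ne_zero, by simp [hφ]⟩
  · exact ⟨φ u, -φ m, Or.inr (neg_ne_zero.mpr hφ), by ring⟩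

variable {m u : ι}

lemma sum_single_add_single (a b : ℝ) :
    ∑ i, (EuclideanSpace.single m a + EuclideanSpace.single u b) i = a + b := by
  simp [Finset.sum_add_distrib]

variable (hmu : m ≠ u) (a b : ℝ)
include hmu

lemma norm_sq_single_add_single :
    ‖EuclideanSpace.single m a + EuclideanSpace.single u b‖ ^ 2 = a ^ 2 + b ^ 2 := by
  simp [EuclideanSpace.norm_sq_eq, add_sq, Finset.sum_add_distrib, ite_pow, hmu.symm]

lemma sum_mul_sq_single_add_single (f : ι → ℝ) :
    ∑ i, f i * (EuclideanSpace.single m a + EuclideanSpace.single u b) i ^ 2 =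
      f m * a ^ 2 + f u * b ^ 2 := by
  simp [add_sq, mul_add, Finset.sum_add_distrib, ite_pow, hmu.symm]

end TwoPointVectors

lemma inner_toEuclideanLin_cgL_add_diagonal {V : ℕ} (W : Fin V → ℝ)
    (x : EuclideanSpace ℝ (Fin V)) :
    ⟪x, toEuclideanLin (cgL V + diagonal W) x⟫ =
      V * ‖x‖ ^ 2 - (∑ i, x i) ^ 2 + ∑ i, W i * x i ^ 2 := by
  rw [EuclideanSpace.norm_sq_eq]
  simp [cgL, PiLp.inner_apply, mulVec, dotProduct, diagonal_apply, sub_mul, add_mul,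
    Finset.sum_add_distrib, Finset.sum_sub_distrib, Finset.mul_sum, Finset.sum_mul, sq, mul_assoc]

lemma inner_toEuclideanLin_cgL_add_diagonal_single_add_single_lt {V : ℕ} {W : Fin V → ℝ}
    {m u : Fin V} (hmu : m ≠ u) (hW : W m < W u) {a b : ℝ} (hab : a ≠ 0 ∨ b ≠ 0) :
    ⟪EuclideanSpace.single m a + EuclideanSpace.single u b, toEuclideanLin (cgL V + diagonal W)
        (EuclideanSpace.single m a + EuclideanSpace.single u b)⟫ <
      (V + W u) * ‖EuclideanSpace.single m a + EuclideanSpace.single u b‖ ^ 2 := by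
  rw [inner_toEuclideanLin_cgL_add_diagonal, norm_sq_single_add_single hmu,
    sum_single_add_single, sum_mul_sq_single_add_single hmu]
  rcases eq_or_ne a 0 with rfl | ha
  · have hb : b ≠ 0 := by simpa using hab
    have hb2 : 0 < b ^ 2 := by positivity
    nlinarith
  · have ha2 : 0 < a ^ 2 := by positivity
    nlinarith [mul_pos (sub_pos.mpr hW) ha2, sq_nonneg (a + b)]

lemma exists_ne_secondMin_eq {V : ℕ} (hV : 2 ≤ V) (W : Fin V → ℝ) (m : Fin V) :
    ∃ u ≠ m, secondMin hV W m = W u := by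
  obtain ⟨u, hu, hWu⟩ := Finset.exists_mem_eq_inf' _ W
  exact ⟨u, Finset.ne_of_mem_erase hu, hWu⟩

theorem first_excited_lt {V : ℕ} (hV : 2 ≤ V) (W : Fin V → ℝ) (m : Fin V)
    (hmin : ∀ u : Fin V, u ≠ m → W m < W u)
    (hH : (cgL V + Matrix.diagonal W).IsHermitian) :
    sortedEig hH ⟨1, by omega⟩ < (V : ℝ) + secondMin hV W m := by
  obtain ⟨u, hum, hu⟩ := exists_ne_secondMin_eq hV W m
  obtain ⟨a, b, hab, horth⟩ := exists_inner_single_add_single_eq_zero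
    (hH.eigenvectorBasis (Tuple.sort hH.eigenvalues ⟨0, by omega⟩)) m u
  have hlow := sortedEig_one_mul_norm_sq_le hH (by omega) horth
  have hup := inner_toEuclideanLin_cgL_add_diagonal_single_add_single_lt hum.symm (hmin u hum) hab
  have hpos : 0 < ‖EuclideanSpace.single m a + EuclideanSpace.single u b‖ ^ 2 := by
    rw [norm_sq_single_add_single hum.symm]
    rcases hab with h | h <;> positivity
  rw [hu]
  exact lt_of_mul_lt_mul_right (hlow.trans_lt hup) hpos.le
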